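/- Let K₃ = ℚ(α) where α is a primitive third root of unity. The vector x₀ = (10+8α, −7, 0, 0, 7, 0, 0) ∈ K₃⁷ satisfies Σ_{i,k} Q_{ik} (x₀)_i (x₀)_k = 0, and the set of one-dimensional K₃-subspaces L of K₃⁷ such that Σ_{i,k} Q_{ik} x_i x_k = 0 for all x ∈ L is infinite (i.e., the smooth quadric x Q xᵀ = 0 has infinitely many projective points over ℚ(α)). -/

import Mathlib

/-!
Let y₀ = (30 − 4α, 14 + 28α, 0, 0, 0, 0, 28). When α² + α + 1 = 0, both x₀ and y₀ are
isotropic for q and orthogonal for its polar form, so q vanishes on the plane spanned by x₀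
and y₀. Over the infinite field K₃ this plane contains infinitely many lines, the lines
spanned by x₀ + t y₀.
-/

noncomputable section

/-- The field K₃ = ℚ(α), α a primitive third root of unity. -/
abbrev K3 : Type := CyclotomicField 3 ℚ

/-- The symmetric matrix Q, viewed over K₃. -/
def QK : Matrix (Fin 7) (Fin 7) K3 :=
  !![7,3,3,1,-3,-3,-5; 3,7,3,3,1,-3,-3; 3,3,7,3,3,1,-3; 1,3,3,7,3,3,1;
     -3,1,3,3,7,3,3; -3,-3,1,3,3,7,3; -5,-3,-3,1,3,3,7]

/-- The quadratic form `q(x) = Σ_{i,k} Q_{ik} xᵢ xₖ` on K₃⁷. -/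
def quadK (x : Fin 7 → K3) : K3 := ∑ i : Fin 7, ∑ k : Fin 7, QK i k * x i * x k

/-- The point x₀ = (10+8α, −7, 0, 0, 7, 0, 0). -/
def x₀ (α : K3) : Fin 7 → K3 := ![10 + 8 * α, -7, 0, 0, 7, 0, 0]

open Module QuadraticMap

lemma IsPrimitiveRoot.sq_add_self_add_one {R : Type*} [CommRing R] [IsDomain R] {ζ : R}
    (h : IsPrimitiveRoot ζ 3) : ζ ^ 2 + ζ + 1 = 0 := by
  have := h.geom_sum_eq_zero (by norm_num)
  simp only [Finset.sum_range_succ, Finset.sum_range_zero] at this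
  linear_combination this

lemma QuadraticMap.eq_zero_of_mem_span_pair {R M N : Type*} [CommRing R] [AddCommGroup M]
    [Module R M] [AddCommGroup N] [Module R N] (Q : QuadraticMap R M N) {v w x : M}
    (hv : Q v = 0) (hw : Q w = 0) (hvw : polar Q v w = 0) (hx : x ∈ Submodule.span R {v, w}) :
    Q x = 0 := by
  obtain ⟨a, b, rfl⟩ := Submodule.mem_span_pair.mp hx
  rw [QuadraticMap.map_add Q, Q.map_smul, Q.map_smul, polar_smul_left, polar_smul_right, hv, hw,
    hvw]
  simp

lemma Submodule.infinite_setOf_finrank_eq_one_le_span_pair {K V : Type*} [Field K] [Infinite K]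
    [AddCommGroup V] [Module K V] {v w : V} (h : LinearIndependent K ![v, w]) :
    {L : Submodule K V | finrank K L = 1 ∧ L ≤ span K {v, w}}.Infinite := by
  rw [LinearIndependent.pair_iff] at h
  refine Set.infinite_of_injective_forall_mem (f := fun t : K => K ∙ (v + t • w)) ?_ fun t => ?_
  · intro t t' (htt' : K ∙ (v + t • w) = K ∙ (v + t' • w))
    have hmem : v + t • w ∈ K ∙ (v + t' • w) := htt' ▸ mem_span_singleton_self _
    obtain ⟨c, hc⟩ := mem_span_singleton.mp hmem
    obtain ⟨hc1, ht⟩ := h (c - 1) (c * t' - t) (by linear_combination (norm := module) hc)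
    rw [sub_eq_zero.mp hc1, one_mul] at ht
    exact (sub_eq_zero.mp ht).symm
  · have hne : v + t • w ≠ 0 := fun h0 => one_ne_zero (h 1 t (by rw [one_smul, h0])).1
    refine ⟨finrank_span_singleton hne, (span_singleton_le_iff_mem _ _).mpr ?_⟩
    exact add_mem (subset_span (by simp)) (smul_mem _ _ (subset_span (by simp)))

def y₀ (α : K3) : Fin 7 → K3 := ![30 - 4 * α, 14 + 28 * α, 0, 0, 0, 0, 28]

lemma coe_toQuadraticForm'_QK : ⇑QK.toQuadraticForm' = quadK := by
  ext x
  simp only [Matrix.toQuadraticForm', LinearMap.BilinMap.toQuadraticMap_apply,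
    Matrix.toLinearMap₂'_apply, quadK]
  exact Finset.sum_congr rfl fun i _ => Finset.sum_congr rfl fun k _ => by ring

lemma quadK_x₀ {α : K3} (hα : α ^ 2 + α + 1 = 0) : quadK (x₀ α) = 0 := by
  simp only [quadK, QK, x₀, Fin.sum_univ_succ, Fin.sum_univ_zero, Matrix.of_apply,
    Matrix.cons_val', Matrix.cons_val_zero, Matrix.cons_val_succ, Matrix.cons_val_fin_one]
  linear_combination 448 * hα

lemma quadK_y₀ {α : K3} (hα : α ^ 2 + α + 1 = 0) : quadK (y₀ α) = 0 := by
  simp only [quadK, QK, y₀, Fin.sum_univ_succ, Fin.sum_univ_zero, Matrix.of_apply,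
    Matrix.cons_val', Matrix.cons_val_zero, Matrix.cons_val_succ, Matrix.cons_val_fin_one]
  linear_combination 4928 * hα

lemma polar_quadK_x₀_y₀ {α : K3} (hα : α ^ 2 + α + 1 = 0) : polar quadK (x₀ α) (y₀ α) = 0 := by
  simp only [polar, quadK, QK, x₀, y₀, Pi.add_apply, Fin.sum_univ_succ, Fin.sum_univ_zero,
    Matrix.of_apply, Matrix.cons_val', Matrix.cons_val_zero, Matrix.cons_val_succ,
    Matrix.cons_val_fin_one]
  linear_combination 896 * hα

lemma quadK_eq_zero_of_mem_span_x₀_y₀ {α : K3} (hα : α ^ 2 + α + 1 = 0) {x : Fin 7 → K3}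
    (hx : x ∈ Submodule.span K3 {x₀ α, y₀ α}) : quadK x = 0 := by
  have h := QK.toQuadraticForm'.eq_zero_of_mem_span_pair (v := x₀ α) (w := y₀ α) (x := x)
  rw [coe_toQuadraticForm'_QK] at h
  exact h (quadK_x₀ hα) (quadK_y₀ hα) (polar_quadK_x₀_y₀ hα) hx

lemma linearIndependent_x₀_y₀ (α : K3) : LinearIndependent K3 ![x₀ α, y₀ α] := by
  refine LinearIndependent.pair_iff.mpr fun s t hst => ⟨?_, ?_⟩
  · simpa [x₀, y₀] using congrFun hst 4
  · simpa [x₀, y₀] using congrFun hst 6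

/-- The point x₀ lies on the quadric `x Q xᵀ = 0`, and the quadric has infinitely many
projective points over K₃ = ℚ(α): the set of one-dimensional K₃-subspaces of K₃⁷ on
which q vanishes is infinite. -/
theorem quadric_has_infinitely_many_points (α : K3) (hα : IsPrimitiveRoot α 3) :
    quadK (x₀ α) = 0 ∧
      {L : Submodule K3 (Fin 7 → K3) |
        Module.finrank K3 L = 1 ∧ ∀ x ∈ L, quadK x = 0}.Infinite := by
  have h3 := hα.sq_add_self_add_one
  refine ⟨quadK_x₀ h3, ?_⟩
  refine (Submodule.infinite_setOf_finrank_eq_one_le_span_pair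
    (linearIndependent_x₀_y₀ α)).mono ?_
  rintro L ⟨hL, hLle⟩
  exact ⟨hL, fun x hx => quadK_eq_zero_of_mem_span_x₀_y₀ h3 (hLle hx)⟩

end
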